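/- Let c ∈ (0, 1/2) and let w ∈ ℤ with −n ≤ w ≤ −1. Suppose the time-linkage RLS or (1+1) EA on f_w, without having reached the global optimum, arrives for the first time at a state in which the number of zero-bits of the current solution is below n^c, and that this state (x',x) satisfies x'_1 = 1 and x_1 = 1. Then with probability at least 1 − 1/n^{1−2c} − (n−1)·e^{−n^c/e}, Event II occurs at some later time of the run. -/

import Mathlib

open scoped Classical BigOperators ENNReal

noncomputable section

/-- Bitstrings of length `n`. -/
abbrev BitStr (n : ℕ) := Fin n → Bool

/-- The number of one-bits of a bitstring. -/
def ones {n : ℕ} (x : BitStr n) : ℕ := (Finset.univ.filter fun i => x i = true).card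

/-- The number of zero-bits of a bitstring. -/
def zeros {n : ℕ} (x : BitStr n) : ℕ := (Finset.univ.filter fun i => x i = false).card

/-- The first bit of a bitstring (`false` if `n = 0`). -/
def firstBit {n : ℕ} (x : BitStr n) : Bool := if h : 0 < n then x ⟨0, h⟩ else false

/-- The number of one-bits among the last `n-1` positions. -/
def onesTail {n : ℕ} (x : BitStr n) : ℕ :=
  (Finset.univ.filter fun i : Fin n => x i = true ∧ (i : ℕ) ≠ 0).card

/-- The all-ones bitstring `1^n`. -/
def allOnes (n : ℕ) : BitStr n := fun _ => true

/-- The time-linkage OneMax function `f_w(x, y) = |y| + w·x₁`, where `x` is the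
previous solution and `y` is the current one. -/
def fW {n : ℕ} (w : ℤ) (x y : BitStr n) : ℤ :=
  (ones y : ℤ) + (if firstBit x then w else 0)

/-- States of the time-linkage algorithms: (previous solution, current solution). -/
abbrev TLState (n : ℕ) := BitStr n × BitStr n

/-- Hamming distance between two bitstrings. -/
def hamming {n : ℕ} (x y : BitStr n) : ℕ := (Finset.univ.filter fun i => x i ≠ y i).card

/-- Standard bit-wise mutation, flipping each bit independently with probability `1/n`:
`mutEA x y` is the probability that mutating `x` yields `y`. -/
def mutEA {n : ℕ} (x y : BitStr n) : ℝ :=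
  (1 / n : ℝ) ^ hamming x y * (1 - 1 / n) ^ (n - hamming x y)

/-- RLS mutation, flipping exactly one bit chosen uniformly at random:
`mutRLS x y` is the probability that mutating `x` yields `y`. -/
def mutRLS {n : ℕ} (x y : BitStr n) : ℝ :=
  if hamming x y = 1 then (1 / n : ℝ) else 0

/-- Transition matrix of the time-linkage (1+1)-type algorithm with mutation
distribution `m` on `f_w`: at state `(x', x)`, an offspring `y` sampled from
`m x ·` is accepted (the state moving to `(x, y)`) iff `f_w(x, y) ≥ f_w(x', x)`;
otherwise the state stays at `(x', x)`. -/
def tlTrans {n : ℕ} (m : BitStr n → BitStr n → ℝ) (w : ℤ) (s t : TLState n) : ℝ :=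
  (∑ y : BitStr n, if fW w s.1 s.2 ≤ fW w s.2 y ∧ t = (s.2, y) then m s.2 y else 0) +
    if t = s then ∑ y : BitStr n, if ¬ fW w s.1 s.2 ≤ fW w s.2 y then m s.2 y else 0 else 0

/-- Transition matrix of the time-linkage (1+1) EA on `f_w`. -/
def transEA {n : ℕ} (w : ℤ) : TLState n → TLState n → ℝ := tlTrans mutEA w

/-- Transition matrix of the time-linkage RLS on `f_w`. -/
def transRLS {n : ℕ} (w : ℤ) : TLState n → TLState n → ℝ := tlTrans mutRLS w

/-- Probability that the chain with transition matrix `P` started at `s`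
visits a state in `E` within the first `T` steps (including time 0). -/
def hitWithin {n : ℕ} (P : TLState n → TLState n → ℝ) (E : TLState n → Prop) :
    ℕ → TLState n → ℝ
  | 0, s => if E s then 1 else 0
  | T + 1, s => if E s then 1 else ∑ t : TLState n, P s t * hitWithin P E T t

/-- Probability that the chain started at `s` ever visits a state in `E`. -/
def hitProb {n : ℕ} (P : TLState n → TLState n → ℝ) (E : TLState n → Prop)
    (s : TLState n) : ℝ := ⨆ T : ℕ, hitWithin P E T s

/-- Probability that the chain started at `s` visits a state in `E` at some
time `≥ 1` (i.e. at a strictly later time). -/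
def hitProbLater {n : ℕ} (P : TLState n → TLState n → ℝ) (E : TLState n → Prop)
    (s : TLState n) : ℝ := ⨆ T : ℕ, ∑ t : TLState n, P s t * hitWithin P E T t

/-- Probability that the chain started at `s` visits `A` within `T` steps
without having visited `B` strictly before (`A` has priority on common states). -/
def raceWithin {n : ℕ} (P : TLState n → TLState n → ℝ) (A B : TLState n → Prop) :
    ℕ → TLState n → ℝ
  | 0, s => if A s then 1 else 0
  | T + 1, s =>
      if A s then 1 else if B s then 0 else ∑ t : TLState n, P s t * raceWithin P A B T t

/-- Probability that the chain started at `s` eventually visits `A` before `B`,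
i.e. reaches `A` without having visited `B` strictly before. -/
def raceProb {n : ℕ} (P : TLState n → TLState n → ℝ) (A B : TLState n → Prop)
    (s : TLState n) : ℝ := ⨆ T : ℕ, raceWithin P A B T s

/-- Probability that the chain started at `s` enters the set `A` within `T`
steps and at the first entrance time is in `E`. -/
def firstHitInWithin {n : ℕ} (P : TLState n → TLState n → ℝ) (A E : TLState n → Prop) :
    ℕ → TLState n → ℝ
  | 0, s => if A s then (if E s then 1 else 0) else 0
  | T + 1, s =>
      if A s then (if E s then 1 else 0)
      else ∑ t : TLState n, P s t * firstHitInWithin P A E T t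

/-- Probability that the chain started at `s` eventually enters the set `A`
and at the first entrance time is in `E`. -/
def firstHitInProb {n : ℕ} (P : TLState n → TLState n → ℝ) (A E : TLState n → Prop)
    (s : TLState n) : ℝ := ⨆ T : ℕ, firstHitInWithin P A E T s

/-- Expected hitting time of `E` for the chain started at `s` (in `ℝ≥0∞`),
via `E[τ] = ∑_{T ≥ 0} P[τ > T]`. -/
def expHitTime {n : ℕ} (P : TLState n → TLState n → ℝ) (E : TLState n → Prop)
    (s : TLState n) : ℝ≥0∞ := ∑' T : ℕ, ENNReal.ofReal (1 - hitWithin P E T s)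

/-- Probability that the chain started at `s` never visits a state in `B`. -/
def avoidProb {n : ℕ} (P : TLState n → TLState n → ℝ) (B : TLState n → Prop)
    (s : TLState n) : ℝ := 1 - hitProb P B s

/-- `E[τ_E · 1_{B is never visited}]` for the chain started at `s` (in `ℝ≥0∞`),
using `P[τ_E > T and B never visited] = P[B never visited] − P[E hit within T
steps, avoiding B]`, which is valid whenever `B` cannot be visited anymore once
`E` has been reached. -/
def expHitTimeAvoid {n : ℕ} (P : TLState n → TLState n → ℝ) (E B : TLState n → Prop)
    (s : TLState n) : ℝ≥0∞ :=
  ∑' T : ℕ, ENNReal.ofReal (avoidProb P B s - raceWithin P E B T s)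

/-- The global optimum for negative weight `w < 0`: the current solution is
`1^n` and the stored previous first bit is `0`. -/
def OptNeg {n : ℕ} (s : TLState n) : Prop := s.2 = allOnes n ∧ firstBit s.1 = false

/-- The global optimum for positive weight `w > 0`: the current solution is
`1^n` and the stored previous first bit is `1`. -/
def OptPos {n : ℕ} (s : TLState n) : Prop := s.2 = allOnes n ∧ firstBit s.1 = true

/-- Event I for the (1+1) EA (for `w < -1`): first bit pattern `(0,1)`,
current solution not `1^n`, and `|x_{[2..n]}| ≥ w + n`. -/
def EventIEA {n : ℕ} (w : ℤ) (s : TLState n) : Prop :=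
  firstBit s.1 = false ∧ firstBit s.2 = true ∧ s.2 ≠ allOnes n ∧
    w + n ≤ (onesTail s.2 : ℤ)

/-- Event I for the RLS (for `w < -1`): first bit pattern `(0,1)` and the
current solution is not `1^n`. -/
def EventIRLS {n : ℕ} (s : TLState n) : Prop :=
  firstBit s.1 = false ∧ firstBit s.2 = true ∧ s.2 ≠ allOnes n

/-- Event II: the current solution is `1^n` and the stored first bit is `1`. -/
def EventII {n : ℕ} (s : TLState n) : Prop :=
  firstBit s.1 = true ∧ s.2 = allOnes n

/-- Event III for the (1+1) EA (for `w > 0`): first bit pattern `(1,0)` and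
`|x_{[2..n]}| ≥ n - w + 1`. -/
def EventIIIEA {n : ℕ} (w : ℤ) (s : TLState n) : Prop :=
  firstBit s.1 = true ∧ firstBit s.2 = false ∧ (n : ℤ) - w + 1 ≤ (onesTail s.2 : ℤ)

/-- Event III for the RLS (for `w > 1`): first bit pattern `(1,0)`. -/
def EventIIIRLS {n : ℕ} (s : TLState n) : Prop :=
  firstBit s.1 = true ∧ firstBit s.2 = false

/-- Euler's number `e`. -/
def eu : ℝ := Real.exp 1

end

/-!
While both stored first bits are `1`, the penalty `w·x₁` enters both sides of every comparison,
so the chain performs plain OneMax selection and the number `V` of zero-bits never increases.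
It leaves this region only through an accepted offspring with first bit `0`, which needs the
first bit and some zero-bit to flip together: probability at most `β V` with `β = 1/n²`.
Meanwhile each zero-bit is flipped alone with probability at least `r = 1/(en)`, so `V`
contracts in expectation by the factor `1 - r`. Induction on the horizon `T` bounds the
probability of not having reached `1ⁿ` (Event II) after `T` steps by `V (Tβ + (1-r)^T)`.
For `V < n^c` and `T = ⌊n^{1+c}⌋` the first term is at most `1/n^{1-2c}`, and the second at
most `2V e^{-n^c/e} ≤ (n-1) e^{-n^c/e}` since `V² < n`, once `n ≥ 3`; for `n = 2` the claimed
bound is nonpositive.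
-/

namespace BitStr

variable {n : ℕ}

theorem ones_add_zeros (x : BitStr n) : ones x + zeros x = n := by
  simpa [ones, zeros] using Finset.card_filter_add_card_filter_not
    (s := (Finset.univ : Finset (Fin n))) (fun i => x i = true)

theorem eq_allOnes_of_zeros_eq_zero {x : BitStr n} (h : zeros x = 0) : x = allOnes n := by
  rw [zeros, Finset.card_eq_zero, Finset.filter_eq_empty_iff] at h
  funext i
  simpa [allOnes] using h (Finset.mem_univ i)

theorem zeros_le_zeros_of_ones_le {x y : BitStr n} (h : ones x ≤ ones y) : zeros y ≤ zeros x := by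
  have := ones_add_zeros x
  have := ones_add_zeros y
  omega

theorem ones_update_true {x : BitStr n} {i : Fin n} (h : x i = false) :
    ones (Function.update x i true) = ones x + 1 := by
  have : (Finset.univ.filter fun l => Function.update x i true l = true) =
      insert i (Finset.univ.filter fun l => x l = true) := by
    ext l
    by_cases hl : l = i <;> simp [Function.update_apply, hl]
  rw [ones, this, Finset.card_insert_of_notMem (by simp [h]), ones]

theorem zeros_update_true {x : BitStr n} {i : Fin n} (h : x i = false) :
    zeros (Function.update x i true) + 1 = zeros x := by
  have := ones_add_zeros x
  have := ones_add_zeros (Function.update x i true)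
  have := ones_update_true h
  omega

theorem pos_of_firstBit_eq_true {x : BitStr n} (h : firstBit x = true) : 0 < n := by
  by_contra hn
  simp [firstBit, hn] at h

theorem firstBit_eq (hn : 0 < n) (x : BitStr n) : firstBit x = x ⟨0, hn⟩ := dif_pos hn

theorem hamming_eq_one_iff {x y : BitStr n} :
    hamming x y = 1 ↔ ∃ i, y = Function.update x i (!x i) := by
  simp only [hamming, Finset.card_eq_one, Finset.ext_iff, Finset.mem_filter,
    Finset.mem_univ, true_and, Finset.mem_singleton, funext_iff, Function.update_apply]
  refine exists_congr fun i => forall_congr' fun l => ?_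
  by_cases hl : l = i
  · subst hl
    cases x l <;> cases y l <;> simp
  · cases x l <;> cases y l <;> simp [hl]

theorem exists_false_true_of_ones_le {x y : BitStr n} {j : Fin n} (hxj : x j = true)
    (hyj : y j = false) (h : ones x ≤ ones y) : ∃ i, x i = false ∧ y i = true := by
  by_contra! hcon
  have hsub : (Finset.univ.filter fun i => y i = true) ⊂
      (Finset.univ.filter fun i => x i = true) := by
    refine Finset.ssubset_iff_of_subset (fun i => ?_) |>.2 ⟨j, by simp [hxj, hyj]⟩
    cases hx : x i <;> simp_all
  exact absurd (Finset.card_lt_card hsub) (not_lt.2 h)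

end BitStr

open BitStr

section Mutation

variable {n : ℕ}

structure MutationBounds (m : BitStr n → BitStr n → ℝ) : Prop where
  nonneg : ∀ x y, 0 ≤ m x y
  sum_eq_one : ∀ x, ∑ y, m x y = 1
  le_of_hamming_eq_one : ∀ x y, hamming x y = 1 → 1 / (eu * n) ≤ m x y
  sum_flip_two_le : ∀ x (i j : Fin n), i ≠ j →
    ∑ y with y i ≠ x i ∧ y j ≠ x j, m x y ≤ 1 / (n : ℝ) ^ 2

theorem two_le_eu : 2 ≤ eu := by
  simpa [eu, one_add_one_eq_two] using Real.add_one_le_exp 1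

theorem one_le_eu : 1 ≤ eu := one_le_two.trans two_le_eu

theorem exp_neg_one_le_one_sub_one_div_pow (n : ℕ) :
    Real.exp (-1) ≤ (1 - 1 / ((n : ℝ) + 1)) ^ n := by
  rcases n.eq_zero_or_pos with rfl | hn
  · simp
  have : 1 - 1 / ((n : ℝ) + 1) = (1 + (n : ℝ)⁻¹)⁻¹ := by
    have : (n : ℝ) ≠ 0 := Nat.cast_ne_zero.2 hn.ne'
    field_simp
    ring
  rw [this, inv_pow, Real.exp_neg]
  exact inv_anti₀ (by positivity) Real.one_add_inv_pow_le_exp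

theorem mutEA_eq_prod (x y : BitStr n) :
    mutEA x y = ∏ i, if x i ≠ y i then (1 / n : ℝ) else 1 - 1 / n := by
  rw [Finset.prod_ite, Finset.prod_const, Finset.prod_const, mutEA, hamming]
  congr
  have := Finset.card_filter_add_card_filter_not (s := Finset.univ) (fun i => x i ≠ y i)
  simp only [Finset.card_univ, Fintype.card_fin] at this
  omega

theorem sum_mutEA_flip_all (x : BitStr n) (A : Finset (Fin n)) :
    ∑ y with ∀ l ∈ A, y l ≠ x l, mutEA x y = (1 / n : ℝ) ^ A.card := by
  let g : Fin n → Bool → ℝ := fun l b =>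
    if l ∈ A ∧ b = x l then 0 else if x l ≠ b then 1 / n else 1 - 1 / n
  have hg : ∀ y : BitStr n, (if ∀ l ∈ A, y l ≠ x l then mutEA x y else 0) = ∏ l, g l (y l) := by
    intro y
    split_ifs with hy
    · rw [mutEA_eq_prod]
      exact Finset.prod_congr rfl fun l _ => by simp +contextual [g, hy l]
    · push Not at hy
      obtain ⟨l, hl, hyl⟩ := hy
      exact (Finset.prod_eq_zero (Finset.mem_univ l) (by simp [g, hl, hyl])).symm
  rw [Finset.sum_filter, Finset.sum_congr rfl fun y _ => hg y, ← Fintype.prod_sum,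
    Finset.prod_congr rfl fun l _ => (?_ : ∑ b, g l b = if l ∈ A then (1 / n : ℝ) else 1),
    Finset.prod_ite_mem, Finset.univ_inter, Finset.prod_const]
  rw [Fintype.sum_bool]
  by_cases hl : l ∈ A <;> cases hx : x l <;> simp [g, hl, hx]

theorem mutationBounds_mutEA (hn : 0 < n) : MutationBounds (mutEA (n := n)) where
  nonneg x y := by
    have : (1 / n : ℝ) ≤ 1 := div_le_one_of_le₀ (by exact_mod_cast hn) (by positivity)
    exact mul_nonneg (by positivity) (pow_nonneg (by linarith) _)
  sum_eq_one x := by simpa using sum_mutEA_flip_all x ∅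
  le_of_hamming_eq_one x y h := by
    obtain ⟨m, rfl⟩ := Nat.exists_eq_add_of_lt hn
    rw [mutEA, h, pow_one, Nat.zero_add, Nat.add_sub_cancel, Nat.cast_add_one]
    calc 1 / (eu * ((m : ℝ) + 1)) = 1 / ((m : ℝ) + 1) * Real.exp (-1) := by
          rw [Real.exp_neg, eu]
          field_simp
      _ ≤ 1 / ((m : ℝ) + 1) * (1 - 1 / ((m : ℝ) + 1)) ^ m := by
          gcongr
          exact exp_neg_one_le_one_sub_one_div_pow m
  sum_flip_two_le x i j hij := by
    have := sum_mutEA_flip_all x {i, j}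
    simp only [Finset.mem_insert, Finset.mem_singleton, forall_eq_or_imp, forall_eq,
      Finset.card_pair hij] at this
    rw [this, div_pow, one_pow]

theorem card_hamming_eq_one (x : BitStr n) :
    (Finset.univ.filter fun y => hamming x y = 1).card = n := by
  have hinj : Function.Injective fun i : Fin n => Function.update x i (!x i) := by
    intro i j hij
    by_contra hne
    simpa [Function.update_of_ne hne] using congrFun hij i
  have : (Finset.univ.filter fun y => hamming x y = 1) =
      Finset.univ.image fun i : Fin n => Function.update x i (!x i) := by
    ext y
    simp [hamming_eq_one_iff, eq_comm]
  rw [this, Finset.card_image_of_injective _ hinj, Finset.card_univ, Fintype.card_fin]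

theorem mutationBounds_mutRLS (hn : 0 < n) : MutationBounds (mutRLS (n := n)) where
  nonneg x y := by
    unfold mutRLS
    positivity
  sum_eq_one x := by
    simp only [mutRLS]
    rw [← Finset.sum_filter, Finset.sum_const, card_hamming_eq_one, nsmul_eq_mul]
    field_simp
  le_of_hamming_eq_one x y h := by
    rw [mutRLS, if_pos h]
    gcongr
    exact le_mul_of_one_le_left (by positivity) one_le_eu
  sum_flip_two_le x i j hij := by
    refine le_of_eq_of_le (Finset.sum_eq_zero fun y hy => if_neg ?_) (by positivity)
    simp only [Finset.mem_filter, Finset.mem_univ, true_and] at hy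
    have : ({i, j} : Finset (Fin n)) ⊆ Finset.univ.filter fun l => x l ≠ y l := by
      simp [Finset.insert_subset_iff, hy.1.symm, hy.2.symm]
    have := Finset.card_le_card this
    rw [Finset.card_pair hij] at this
    rw [hamming]
    omega

end Mutation

section TimeLinkage

variable {n : ℕ} {m : BitStr n → BitStr n → ℝ} {w : ℤ}

theorem fW_le_fW_iff {s : TLState n} (h1 : firstBit s.1 = true) (h2 : firstBit s.2 = true)
    (y : BitStr n) : fW w s.1 s.2 ≤ fW w s.2 y ↔ ones s.2 ≤ ones y := by
  simp [fW, h1, h2]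

theorem tlTrans_nonneg (hm : ∀ x y, 0 ≤ m x y) (s t : TLState n) : 0 ≤ tlTrans m w s t := by
  unfold tlTrans
  refine add_nonneg (Finset.sum_nonneg fun y _ => ?_) ?_
  · split_ifs <;> simp [hm]
  · split_ifs
    · exact Finset.sum_nonneg fun y _ => by split_ifs <;> simp [hm]
    · rfl

theorem sum_tlTrans_mul (f : TLState n → ℝ) (s : TLState n) :
    ∑ t, tlTrans m w s t * f t =
      ∑ y, m s.2 y * if fW w s.1 s.2 ≤ fW w s.2 y then f (s.2, y) else f s := by
  simp only [tlTrans, add_mul, Finset.sum_add_distrib, Finset.sum_mul, ite_mul, zero_mul,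
    ite_and]
  rw [Finset.sum_comm]
  simp only [Finset.sum_ite_eq', Finset.mem_univ, if_true, ← Finset.sum_add_distrib, mul_ite]
  refine Finset.sum_congr rfl fun y _ => ?_
  split_ifs <;> simp

theorem sum_tlTrans (hm : ∀ x, ∑ y, m x y = 1) (s : TLState n) : ∑ t, tlTrans m w s t = 1 := by
  simpa [hm] using sum_tlTrans_mul (m := m) (w := w) (fun _ => 1) s

end TimeLinkage

section Hitting

variable {n : ℕ} {P : TLState n → TLState n → ℝ} {E G : TLState n → Prop}

theorem hitWithin_nonneg (hP : ∀ s t, 0 ≤ P s t) (T : ℕ) (s : TLState n) :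
    0 ≤ hitWithin P E T s := by
  induction T generalizing s with
  | zero => unfold hitWithin; positivity
  | succ T ih =>
    unfold hitWithin
    split_ifs
    · exact zero_le_one
    · exact Finset.sum_nonneg fun t _ => mul_nonneg (hP s t) (ih t)

theorem hitWithin_le_one (hP : ∀ s t, 0 ≤ P s t) (hP1 : ∀ s, ∑ t, P s t = 1) (T : ℕ)
    (s : TLState n) : hitWithin P E T s ≤ 1 := by
  induction T generalizing s with
  | zero => unfold hitWithin; split_ifs <;> norm_num
  | succ T ih =>
    unfold hitWithin
    split_ifs
    · rfl
    · calc ∑ t, P s t * hitWithin P E T t ≤ ∑ t, P s t :=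
            Finset.sum_le_sum fun t _ => mul_le_of_le_one_right (hP s t) (ih t)
        _ = 1 := hP1 s

theorem sum_mul_hitWithin_le_hitProbLater (hP : ∀ s t, 0 ≤ P s t)
    (hP1 : ∀ s, ∑ t, P s t = 1) (T : ℕ) (s : TLState n) :
    ∑ t, P s t * hitWithin P E T t ≤ hitProbLater P E s := by
  refine le_ciSup (f := fun T => ∑ t, P s t * hitWithin P E T t) ⟨1, ?_⟩ T
  rintro _ ⟨T, rfl⟩
  calc ∑ t, P s t * hitWithin P E T t ≤ ∑ t, P s t :=
        Finset.sum_le_sum fun t _ => mul_le_of_le_one_right (hP s t) (hitWithin_le_one hP hP1 T t)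
    _ = 1 := hP1 s

theorem hitProbLater_nonneg (hP : ∀ s t, 0 ≤ P s t) (hP1 : ∀ s, ∑ t, P s t = 1)
    (s : TLState n) : 0 ≤ hitProbLater P E s :=
  (Finset.sum_nonneg fun t _ => mul_nonneg (hP s t) (hitWithin_nonneg hP 0 t)).trans
    (sum_mul_hitWithin_le_hitProbLater hP hP1 0 s)

variable {V : TLState n → ℝ} {β r : ℝ}

theorem one_sub_sum_mul_le_of_drift (hP : ∀ s t, 0 ≤ P s t) (hP1 : ∀ s, ∑ t, P s t = 1)
    (hV : ∀ u, 0 ≤ V u) (hβ : 0 ≤ β) (hr0 : 0 ≤ r) (hr1 : r ≤ 1) {t : TLState n}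
    (hescape : ∑ u, P t u * (if G u then 0 else 1) ≤ β * V t)
    (hdrift : ∑ u, P t u * V u ≤ (1 - r) * V t) {h : TLState n → ℝ} (hh : ∀ u, 0 ≤ h u)
    (T : ℕ) (hG : ∀ u, G u → 1 - h u ≤ V u * (T * β + (1 - r) ^ T)) :
    1 - ∑ u, P t u * h u ≤ V t * ((T + 1 : ℕ) * β + (1 - r) ^ (T + 1)) := by
  set C := (T : ℝ) * β + (1 - r) ^ T
  have hC : 0 ≤ C := by
    have : 0 ≤ 1 - r := by linarith
    positivity
  have hpoint : ∀ u, 1 - h u ≤ C * V u + (if G u then 0 else 1) := by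
    intro u
    by_cases hu : G u
    · simpa [hu, mul_comm] using hG u hu
    · simpa [hu] using add_le_add (mul_nonneg hC (hV u)) (sub_le_self 1 (hh u))
  calc 1 - ∑ u, P t u * h u = ∑ u, P t u * (1 - h u) := by
        simp [mul_sub, Finset.sum_sub_distrib, hP1]
    _ ≤ ∑ u, P t u * (C * V u + if G u then 0 else 1) :=
        Finset.sum_le_sum fun u _ => mul_le_mul_of_nonneg_left (hpoint u) (hP t u)
    _ = C * ∑ u, P t u * V u + ∑ u, P t u * (if G u then 0 else 1) := by
        rw [Finset.mul_sum, ← Finset.sum_add_distrib]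
        exact Finset.sum_congr rfl fun u _ => by ring
    _ ≤ C * ((1 - r) * V t) + β * V t := by gcongr
    _ ≤ V t * ((T + 1 : ℕ) * β + (1 - r) ^ (T + 1)) := by
        have : 0 ≤ V t * (r * T * β) := by have := hV t; positivity
        simp only [C]
        push_cast
        rw [pow_succ]
        linear_combination this

theorem one_sub_hitWithin_le (hP : ∀ s t, 0 ≤ P s t) (hP1 : ∀ s, ∑ t, P s t = 1)
    (hV : ∀ u, 0 ≤ V u) (hβ : 0 ≤ β) (hr0 : 0 ≤ r) (hr1 : r ≤ 1)
    (hV1 : ∀ t, G t → ¬ E t → 1 ≤ V t)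
    (hescape : ∀ t, G t → ∑ u, P t u * (if G u then 0 else 1) ≤ β * V t)
    (hdrift : ∀ t, G t → ∑ u, P t u * V u ≤ (1 - r) * V t) (T : ℕ) {t : TLState n}
    (ht : G t) : 1 - hitWithin P E T t ≤ V t * (T * β + (1 - r) ^ T) := by
  have hbound : ∀ (T : ℕ) t, 0 ≤ V t * (T * β + (1 - r) ^ T) := fun T t => by
    have := hV t
    have : 0 ≤ 1 - r := by linarith
    positivity
  induction T generalizing t with
  | zero =>
    by_cases hE : E t
    · simpa [hitWithin, hE] using hbound 0 t
    · simpa [hitWithin, hE] using hV1 t ht hE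
  | succ T ih =>
    by_cases hE : E t
    · simpa [hitWithin, hE] using hbound (T + 1) t
    · rw [hitWithin, if_neg hE]
      exact one_sub_sum_mul_le_of_drift hP hP1 hV hβ hr0 hr1 (hescape t ht) (hdrift t ht)
        (hitWithin_nonneg hP T) T fun u hu => ih hu

theorem one_sub_le_hitProbLater (hP : ∀ s t, 0 ≤ P s t) (hP1 : ∀ s, ∑ t, P s t = 1)
    (hV : ∀ u, 0 ≤ V u) (hβ : 0 ≤ β) (hr0 : 0 ≤ r) (hr1 : r ≤ 1)
    (hV1 : ∀ t, G t → ¬ E t → 1 ≤ V t)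
    (hescape : ∀ t, G t → ∑ u, P t u * (if G u then 0 else 1) ≤ β * V t)
    (hdrift : ∀ t, G t → ∑ u, P t u * V u ≤ (1 - r) * V t) (T : ℕ) {s : TLState n}
    (hs : G s) : 1 - V s * ((T + 1 : ℕ) * β + (1 - r) ^ (T + 1)) ≤ hitProbLater P E s := by
  have := one_sub_sum_mul_le_of_drift hP hP1 hV hβ hr0 hr1 (hescape s hs) (hdrift s hs)
    (hitWithin_nonneg hP T) T fun u hu =>
      one_sub_hitWithin_le hP hP1 hV hβ hr0 hr1 hV1 hescape hdrift T hu
  linarith [sum_mul_hitWithin_le_hitProbLater hP hP1 (E := E) T s]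

end Hitting

section Region

variable {n : ℕ} {m : BitStr n → BitStr n → ℝ} {w : ℤ}

def OneOneRegion (K : ℕ) (t : TLState n) : Prop :=
  firstBit t.1 = true ∧ firstBit t.2 = true ∧ zeros t.2 ≤ K

/-- Leaving the region requires flipping the first bit together with some zero-bit. -/
theorem sum_tlTrans_mul_escape_le (hm : MutationBounds m) {K : ℕ} {t : TLState n}
    (ht : OneOneRegion K t) :
    ∑ u, tlTrans m w t u * (if OneOneRegion K u then 0 else 1) ≤ 1 / (n : ℝ) ^ 2 * zeros t.2 := by
  obtain ⟨ht1, ht2, htK⟩ := ht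
  have hn := pos_of_firstBit_eq_true ht2
  set x := t.2
  set j : Fin n := ⟨0, hn⟩
  have hxj : x j = true := by rwa [firstBit_eq hn] at ht2
  set Z := Finset.univ.filter fun i => x i = false
  have hpoint : ∀ y, m x y * (if fW w t.1 x ≤ fW w x y then
      (if OneOneRegion K (x, y) then 0 else 1) else (if OneOneRegion K t then 0 else 1)) ≤
      ∑ i ∈ Z, if y j ≠ x j ∧ y i ≠ x i then m x y else 0 := by
    intro y
    have hsum := Finset.sum_nonneg fun i (_ : i ∈ Z) =>
      (by split_ifs <;> simp [hm.nonneg] : 0 ≤ if y j ≠ x j ∧ y i ≠ x i then m x y else 0)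
    split_ifs with hacc hG hG'
    · simpa using hsum
    · rw [fW_le_fW_iff ht1 ht2] at hacc
      have hyj : y j = false := by
        by_contra hyj
        refine hG ⟨ht2, ?_, (zeros_le_zeros_of_ones_le hacc).trans htK⟩
        simpa [firstBit_eq hn] using hyj
      obtain ⟨i, hxi, hyi⟩ := exists_false_true_of_ones_le hxj hyj hacc
      refine le_of_eq_of_le ?_ (Finset.single_le_sum (fun i _ => ?_) (by simpa [Z] using hxi))
      · simp [hxj, hyj, hxi, hyi]
      · split_ifs <;> simp [hm.nonneg]
    · simpa using hsum
    · exact absurd ⟨ht1, ht2, htK⟩ hG'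
  rw [sum_tlTrans_mul]
  calc _ ≤ ∑ y, ∑ i ∈ Z, if y j ≠ x j ∧ y i ≠ x i then m x y else 0 :=
        Finset.sum_le_sum fun y _ => hpoint y
    _ = ∑ i ∈ Z, ∑ y with y j ≠ x j ∧ y i ≠ x i, m x y := by
        rw [Finset.sum_comm]
        simp only [Finset.sum_filter]
    _ ≤ ∑ _i ∈ Z, 1 / (n : ℝ) ^ 2 := by
        refine Finset.sum_le_sum fun i hi => hm.sum_flip_two_le x j i ?_
        rintro rfl
        simp [Z, hxj] at hi
    _ = 1 / (n : ℝ) ^ 2 * zeros x := by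
        rw [Finset.sum_const, nsmul_eq_mul, mul_comm]
        rfl

/-- Each of the `zeros x` one-bit flips `0 → 1` is accepted and has probability at least
`1/(en)`, while no accepted offspring has more zero-bits. -/
theorem sum_tlTrans_mul_zeros_le (hm : MutationBounds m) {t : TLState n}
    (ht1 : firstBit t.1 = true) (ht2 : firstBit t.2 = true) :
    ∑ u, tlTrans m w t u * (zeros u.2 : ℝ) ≤ (1 - 1 / (eu * n)) * zeros t.2 := by
  set x := t.2
  set Z := Finset.univ.filter fun i => x i = false
  let g : BitStr n → ℝ := fun y => if fW w t.1 x ≤ fW w x y then (zeros y : ℝ) else zeros x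
  have hg : ∀ y, g y ≤ zeros x := fun y => by
    unfold g
    split_ifs with hacc
    · rw [fW_le_fW_iff ht1 ht2] at hacc
      exact_mod_cast zeros_le_zeros_of_ones_le hacc
    · rfl
  have hflip : ∀ i ∈ Z, 1 ≤ (zeros x : ℝ) - g (Function.update x i true) := fun i hi => by
    have hxi : x i = false := by simpa [Z] using hi
    have hacc : fW w t.1 x ≤ fW w x (Function.update x i true) := by
      rw [fW_le_fW_iff ht1 ht2]
      exact (Nat.le_succ _).trans (ones_update_true hxi).ge
    have := zeros_update_true hxi
    simp only [g, if_pos hacc]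
    rw [← this]
    push_cast
    linarith
  have hinj : Set.InjOn (fun i => Function.update x i true) Z := fun i hi j _ hij => by
    by_contra hne
    have hxi : x i = false := by simpa [Z] using hi
    simpa [Function.update_of_ne hne, hxi] using congrFun hij i
  have hgain : (zeros x : ℝ) * (1 / (eu * n)) ≤ ∑ y, m x y * (zeros x - g y) :=
    calc (zeros x : ℝ) * (1 / (eu * n)) = ∑ _i ∈ Z, 1 / (eu * n) := by
          rw [Finset.sum_const, nsmul_eq_mul]
          rfl
      _ ≤ ∑ i ∈ Z, m x (Function.update x i true) * (zeros x - g (Function.update x i true)) :=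
          Finset.sum_le_sum fun i hi => by
            have hxi : x i = false := by simpa [Z] using hi
            have := hm.le_of_hamming_eq_one x (Function.update x i true)
              (hamming_eq_one_iff.2 ⟨i, by rw [hxi, Bool.not_false]⟩)
            exact this.trans (le_mul_of_one_le_right (hm.nonneg _ _) (hflip i hi))
      _ = ∑ y ∈ Z.image fun i => Function.update x i true, m x y * (zeros x - g y) :=
          (Finset.sum_image (f := fun y => m x y * (zeros x - g y)) hinj).symm
      _ ≤ ∑ y, m x y * (zeros x - g y) :=
          Finset.sum_le_univ_sum_of_nonneg fun y => mul_nonneg (hm.nonneg x y) (by linarith [hg y])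
  rw [sum_tlTrans_mul]
  simp only [mul_sub, Finset.sum_sub_distrib, ← Finset.sum_mul, hm.sum_eq_one, one_mul] at hgain
  change ∑ y, m x y * g y ≤ _
  linarith

end Region

theorem one_sub_le_hitProbLater_eventII {n : ℕ} {m : BitStr n → BitStr n → ℝ} {w : ℤ}
    (hm : MutationBounds m) {s : TLState n} (h1 : firstBit s.1 = true)
    (h2 : firstBit s.2 = true) (T : ℕ) :
    1 - zeros s.2 * ((T + 1 : ℕ) * (1 / (n : ℝ) ^ 2) + (1 - 1 / (eu * n)) ^ (T + 1)) ≤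
      hitProbLater (tlTrans m w) EventII s := by
  have hn : (1 : ℝ) ≤ n := by exact_mod_cast pos_of_firstBit_eq_true h2
  have hr1 : 1 / (eu * n) ≤ 1 :=
    div_le_one_of_le₀ (one_le_mul_of_one_le_of_one_le one_le_eu hn) (by positivity [one_le_eu])
  refine one_sub_le_hitProbLater (tlTrans_nonneg hm.nonneg) (sum_tlTrans hm.sum_eq_one)
    (G := OneOneRegion (zeros s.2)) (fun _ => Nat.cast_nonneg _) (by positivity)
    (by positivity [one_le_eu]) hr1 ?_ (fun t ht => sum_tlTrans_mul_escape_le hm ht)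
    (fun t ht => sum_tlTrans_mul_zeros_le hm ht.1 ht.2.1) T ⟨h1, h2, le_rfl⟩
  intro t ht hE
  by_contra! hz
  exact hE ⟨ht.1, eq_allOnes_of_zeros_eq_zero (Nat.lt_one_iff.mp (by exact_mod_cast hz))⟩

section Estimates

variable {n k T : ℕ} {c : ℝ}

theorem mul_mul_one_div_sq_le (hn : 0 < n) (hk : (k : ℝ) < (n : ℝ) ^ c)
    (hT : (T : ℝ) ≤ (n : ℝ) ^ (1 + c)) :
    k * (T * (1 / (n : ℝ) ^ 2)) ≤ 1 / (n : ℝ) ^ (1 - 2 * c) := by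
  have hN : (0 : ℝ) < n := by exact_mod_cast hn
  calc k * (T * (1 / (n : ℝ) ^ 2)) ≤ (n : ℝ) ^ c * (n : ℝ) ^ (1 + c) * (1 / (n : ℝ) ^ 2) := by
        rw [← mul_assoc]
        gcongr
    _ = 1 / (n : ℝ) ^ (1 - 2 * c) := by
        rw [← Real.rpow_add hN, ← Real.rpow_two, one_div, one_div, ← Real.rpow_neg hN.le,
          ← Real.rpow_neg hN.le, ← Real.rpow_add hN]
        ring_nf

theorem two_mul_le_sub_one (hn : 3 ≤ n) (hc : c < 1 / 2) (hk : (k : ℝ) < (n : ℝ) ^ c) :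
    2 * (k : ℝ) ≤ n - 1 := by
  have hsqrt : (k : ℝ) < √n := by
    rw [Real.sqrt_eq_rpow]
    exact hk.trans_le (Real.rpow_le_rpow_of_exponent_le (by exact_mod_cast (by omega : 1 ≤ n))
      hc.le)
  have : k ^ 2 < n := by exact_mod_cast (Real.lt_sqrt (by positivity)).1 hsqrt
  have : 2 * k + 1 ≤ n := by rcases le_or_gt k 1 with h | h <;> nlinarith
  have : ((2 * k + 1 : ℕ) : ℝ) ≤ n := by exact_mod_cast this
  push_cast at this
  linarith

theorem mul_one_sub_pow_le (hn : 3 ≤ n) (hc : c < 1 / 2) (hk : (k : ℝ) < (n : ℝ) ^ c)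
    (hT : (n : ℝ) ^ (1 + c) ≤ T + 1) :
    k * (1 - 1 / (eu * n)) ^ T ≤ (n - 1) * Real.exp (-(n : ℝ) ^ c / eu) := by
  have hN : (3 : ℝ) ≤ n := by exact_mod_cast hn
  set r := 1 / (eu * n)
  have hr : r ≤ 1 / 3 := by
    unfold r
    gcongr
    nlinarith [one_le_eu]
  have hr0 : 0 ≤ r := by positivity [one_le_eu]
  have hrT : -(r * T) ≤ -((n : ℝ) ^ c / eu) + r := by
    have : (n : ℝ) ^ (1 + c) = n * (n : ℝ) ^ c := by
      rw [Real.rpow_add (by positivity), Real.rpow_one]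
    have : (n : ℝ) ^ c / eu = r * (n * (n : ℝ) ^ c) := by
      unfold r
      field_simp [(by positivity [one_le_eu] : eu ≠ 0)]
    nlinarith
  have hexp_r : Real.exp r ≤ 2 := by
    refine (Real.exp_bound_div_one_sub_of_interval hr0 (by linarith)).trans ?_
    rw [div_le_iff₀ (by linarith)]
    linarith
  have hpow : (1 - r) ^ T ≤ Real.exp (-(r * T)) :=
    calc (1 - r) ^ T ≤ Real.exp (-r) ^ T :=
          pow_le_pow_left₀ (by linarith) (Real.one_sub_le_exp_neg r) T
      _ = Real.exp (-(r * T)) := by rw [← Real.exp_nat_mul]; ring_nf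
  calc (k : ℝ) * (1 - r) ^ T ≤ k * (Real.exp (-((n : ℝ) ^ c / eu)) * Real.exp r) := by
        rw [← Real.exp_add]
        gcongr
        exact hpow.trans (Real.exp_le_exp.2 hrT)
    _ ≤ k * (Real.exp (-((n : ℝ) ^ c / eu)) * 2) := by gcongr
    _ = (2 * k) * Real.exp (-((n : ℝ) ^ c / eu)) := by ring
    _ ≤ (n - 1) * Real.exp (-(n : ℝ) ^ c / eu) := by
        rw [neg_div]
        gcongr
        exact two_mul_le_sub_one hn hc hk

theorem one_sub_one_div_two_rpow_sub_exp_nonpos (hc : 0 ≤ c) :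
    1 - 1 / (2 : ℝ) ^ (1 - 2 * c) - (2 - 1) * Real.exp (-(2 : ℝ) ^ c / eu) ≤ 0 := by
  set t := (2 : ℝ) ^ c
  have ht : 1 ≤ t := Real.one_le_rpow one_le_two hc
  have hsq : 1 / (2 : ℝ) ^ (1 - 2 * c) = t ^ 2 / 2 := by
    rw [← Real.rpow_natCast, ← Real.rpow_mul zero_le_two, div_eq_div_iff (by positivity)
      two_ne_zero, one_mul, ← Real.rpow_add two_pos]
    ring_nf
    exact (Real.rpow_one 2).symm
  have hexp := Real.one_sub_le_exp_neg (t / eu)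
  have : t / eu ≤ t / 2 := div_le_div_of_nonneg_left (by positivity) two_pos two_le_eu
  rw [hsq, neg_div]
  nlinarith

theorem le_max_one_sub_mul (hn : 0 < n) (hc0 : 0 < c) (hc2 : c < 1 / 2)
    (hk : (k : ℝ) < (n : ℝ) ^ c) (hT1 : (T : ℝ) ≤ (n : ℝ) ^ (1 + c))
    (hT2 : (n : ℝ) ^ (1 + c) ≤ T + 1) :
    1 - 1 / (n : ℝ) ^ (1 - 2 * c) - (n - 1) * Real.exp (-(n : ℝ) ^ c / eu) ≤
      max (1 - k * (T * (1 / (n : ℝ) ^ 2) + (1 - 1 / (eu * n)) ^ T)) 0 := by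
  obtain rfl | rfl | hn3 : n = 1 ∨ n = 2 ∨ 3 ≤ n := by omega
  · have : k = 0 := by simpa using hk
    simp [this]
  · exact le_max_of_le_right (by exact_mod_cast one_sub_one_div_two_rpow_sub_exp_nonpos hc0.le)
  · refine le_max_of_le_left ?_
    have := mul_mul_one_div_sq_le hn hk hT1
    have := mul_one_sub_pow_le hn3 hc2 hk hT2
    linarith [mul_add (k : ℝ) (T * (1 / (n : ℝ) ^ 2)) ((1 - 1 / (eu * n)) ^ T)]

end Estimates

theorem hitProbLater_eventII_ge {n : ℕ} {m : BitStr n → BitStr n → ℝ} {w : ℤ}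
    (hm : MutationBounds m) {c : ℝ} (hc0 : 0 < c) (hc2 : c < 1 / 2) {s : TLState n}
    (hzeros : (zeros s.2 : ℝ) < (n : ℝ) ^ c) (h1 : firstBit s.1 = true)
    (h2 : firstBit s.2 = true) :
    1 - 1 / (n : ℝ) ^ (1 - 2 * c) - (n - 1) * Real.exp (-(n : ℝ) ^ c / eu) ≤
      hitProbLater (tlTrans m w) EventII s := by
  have hn := pos_of_firstBit_eq_true h2
  obtain ⟨T, hT⟩ : ∃ T, ⌊(n : ℝ) ^ (1 + c)⌋₊ = T + 1 := Nat.exists_eq_add_one.2 <|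
    Nat.floor_pos.2 (Real.one_le_rpow (by exact_mod_cast hn) (by linarith))
  have hT1 : ((T + 1 : ℕ) : ℝ) ≤ (n : ℝ) ^ (1 + c) := hT ▸ Nat.floor_le (by positivity)
  have hT2 : (n : ℝ) ^ (1 + c) ≤ (T + 1 : ℕ) + 1 := hT ▸ (Nat.lt_floor_add_one _).le
  exact (le_max_one_sub_mul hn hc0 hc2 hzeros hT1 hT2).trans <| max_le
    (one_sub_le_hitProbLater_eventII hm h1 h2 T)
    (hitProbLater_nonneg (tlTrans_nonneg hm.nonneg) (sum_tlTrans hm.sum_eq_one) s)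

theorem stmt10_general (n : ℕ) (c : ℝ) (hc : c ∈ Set.Ioo (0 : ℝ) (1 / 2))
    (w : ℤ)
    (s : TLState n) (hzeros : (zeros s.2 : ℝ) < (n : ℝ) ^ c)
    (h1 : firstBit s.1 = true) (h2 : firstBit s.2 = true) :
    ∀ P ∈ ({transEA (n := n) w, transRLS (n := n) w} :
        Set (TLState n → TLState n → ℝ)),
      hitProbLater P (EventII (n := n)) s ≥
        1 - 1 / (n : ℝ) ^ (1 - 2 * c) -
          ((n : ℝ) - 1) * Real.exp (-(n : ℝ) ^ c / eu) := by
  have hn := pos_of_firstBit_eq_true h2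
  rintro P (rfl | rfl)
  · exact hitProbLater_eventII_ge (mutationBounds_mutEA hn) hc.1 hc.2 hzeros h1 h2
  · exact hitProbLater_eventII_ge (mutationBounds_mutRLS hn) hc.1 hc.2 hzeros h1 h2

/-- Let `c ∈ (0, 1/2)` and `-n ≤ w ≤ -1`. If the
time-linkage RLS or (1+1) EA on `f_w` is at a non-optimal state `(x', x)` with
fewer than `n^c` zero-bits in the current solution and with first bit pattern
`(1, 1)` (as is the situation when it first arrives below `n^c` zeros without
having reached the global optimum), then with probability at least
`1 - 1/n^{1-2c} - (n-1)·e^{-n^c/e}`, Event II occurs at some later time. -/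
theorem stmt10 (n : ℕ) (hn : 1 ≤ n) (c : ℝ) (hc : c ∈ Set.Ioo (0 : ℝ) (1 / 2))
    (w : ℤ) (hw1 : -(n : ℤ) ≤ w) (hw2 : w ≤ -1)
    (s : TLState n) (hzeros : (zeros s.2 : ℝ) < (n : ℝ) ^ c)
    (hnopt : ¬ OptNeg s)
    (h1 : firstBit s.1 = true) (h2 : firstBit s.2 = true) :
    ∀ P ∈ ({transEA (n := n) w, transRLS (n := n) w} :
        Set (TLState n → TLState n → ℝ)),
      hitProbLater P (EventII (n := n)) s ≥
        1 - 1 / (n : ℝ) ^ (1 - 2 * c) -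
          ((n : ℝ) - 1) * Real.exp (-(n : ℝ) ^ c / eu) :=
  stmt10_general n c hc w s hzeros h1 h2
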